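/- Let E be a second-countable topological graph, β ∈ ℝ, and ν a β-quasi-invariant regular Borel measure on ∂E (i.e. σ*ν = e^β ν on ∂E \ E⁰). Then the pushforward μ = r_*ν along the (extended) range map r : ∂E → E⁰ is a regular Borel measure on E⁰ that is β-sub-invariant: Tμ ≤ e^β μ on E⁰, with equality on the set E⁰_reg of regular vertices, where T = r_* s* is composed of the pullback along the source map s : E¹ → E⁰ and the pushforward along the range map r : E¹ → E⁰. -/

import Mathlib

open MeasureTheory Set

namespace TopGraph

universe u
variable {V E : Type u} (r s : E → V)

/-- Composability of a tuple of edges: the source of each edge is the range of the next. -/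
def Comp (n : ℕ) (a : Fin n → E) : Prop :=
  ∀ i j : Fin n, (j : ℕ) = (i : ℕ) + 1 → s (a i) = r (a j)

/-- The space `E^n` of paths of length `n`; `E^0` is the vertex space `V`. -/
def PathN : ℕ → Type u
  | 0 => V
  | n + 1 => {a : Fin (n + 1) → E // Comp r s (n + 1) a}

/-- The space `E^∞` of infinite paths. -/
def PathInf : Type u := {a : ℕ → E // ∀ i : ℕ, s (a i) = r (a (i + 1))}

/-- The edges of a finite path. -/
def edgeOf : ∀ {n : ℕ}, PathN r s n → Fin n → E
  | 0, _, i => absurd i.isLt (by omega)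
  | _ + 1, q, i => q.1 i

/-- The source of a finite path (for a vertex, the vertex itself). -/
def srcFin : ∀ {n : ℕ}, PathN r s n → V
  | 0, v => v
  | n + 1, q => s (q.1 ⟨n, Nat.lt_succ_self n⟩)

/-- The range of a finite path (for a vertex, the vertex itself). -/
def rngFin : ∀ {n : ℕ}, PathN r s n → V
  | 0, v => v
  | n + 1, q => r (q.1 ⟨0, Nat.succ_pos n⟩)

/-- Truncation `a ↦ a(n)` of a finite path, with `a(0) = r(a)`. -/
def truncFin : ∀ {m n : ℕ}, n ≤ m → PathN r s m → PathN r s n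
  | 0, 0, _, q => q
  | _ + 1, 0, _, q => r (q.1 ⟨0, Nat.succ_pos _⟩)
  | 0, _ + 1, h, _ => absurd h (by omega)
  | _ + 1, _ + 1, h, q =>
    ⟨fun i => q.1 (Fin.castLE h i), fun i j hij =>
      q.2 (Fin.castLE h i) (Fin.castLE h j) (by simpa using hij)⟩

/-- Truncation `a ↦ a(n)` of an infinite path. -/
def truncInf (a : PathInf r s) : ∀ n : ℕ, PathN r s n
  | 0 => r (a.1 0)
  | n + 1 => ⟨fun i => a.1 i, fun i j hij => by
      show s (a.1 (i : ℕ)) = r (a.1 (j : ℕ))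
      rw [hij]
      exact a.2 (i : ℕ)⟩

/-- The finite path space `E* = ⊔ₙ E^n`. -/
def FinPath : Type u := Σ n : ℕ, PathN r s n

/-- Truncation of a finite path, as a map of `E*`. -/
def ftrunc (p : FinPath r s) (k : ℕ) (h : k ≤ p.1) : FinPath r s :=
  ⟨k, truncFin r s h p.2⟩

section Topology

variable [TopologicalSpace V] [TopologicalSpace E]

instance instTopPathN : ∀ n : ℕ, TopologicalSpace (PathN r s n)
  | 0 => (inferInstance : TopologicalSpace V)
  | n + 1 => (inferInstance : TopologicalSpace {a : Fin (n + 1) → E // Comp r s (n + 1) a})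

noncomputable instance instMeasPathN (n : ℕ) : MeasurableSpace (PathN r s n) := borel _

instance instTopPathInf : TopologicalSpace (PathInf r s) :=
  (inferInstance : TopologicalSpace {a : ℕ → E // ∀ i : ℕ, s (a i) = r (a (i + 1))})

instance instTopFinPath : TopologicalSpace (FinPath r s) :=
  (inferInstance : TopologicalSpace (Σ n : ℕ, PathN r s n))

/-- A vertex is regular if it has a relatively compact open neighborhood `U` with
`r⁻¹(cl U)` compact and `r(r⁻¹(U)) = U`. -/
def RegularVertex (v : V) : Prop :=
  ∃ U : Set V, IsOpen U ∧ v ∈ U ∧ IsCompact (closure U) ∧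
    IsCompact (r ⁻¹' closure U) ∧ r '' (r ⁻¹' U) = U

/-- The carrier of the boundary path space: finite or infinite paths. -/
def BPathCarrier : Type u := FinPath r s ⊕ PathInf r s

/-- Length of a (possibly infinite) path, in `ℕ∞`. -/
def blen : BPathCarrier r s → ℕ∞
  | .inl p => (p.1 : ℕ∞)
  | .inr _ => ⊤

/-- Truncation `a ↦ a(n)` of a boundary path, `n ≤ |a|`, valued in `E*`. -/
def btrunc : ∀ (x : BPathCarrier r s) (n : ℕ), (n : ℕ∞) ≤ blen r s x → FinPath r s
  | .inl p, n, h => ftrunc r s p n (by simpa [blen] using h)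
  | .inr a, n, _ => ⟨n, truncInf r s a n⟩

/-- The boundary path space `∂E`: singular finite paths together with infinite paths. -/
def BPath : Type u :=
  {x : BPathCarrier r s //
    ∀ p : FinPath r s, x = Sum.inl p → ¬ RegularVertex r (srcFin r s p.2)}

/-- The cylinder sets `Z(S) = {a ∈ ∂E : a(n) ∈ S for some n ≤ |a|}`. -/
def ZSet (S : Set (FinPath r s)) : Set (BPath r s) :=
  {x | ∃ (n : ℕ) (h : (n : ℕ∞) ≤ blen r s x.val), btrunc r s x.val n h ∈ S}

/-- The topology on `∂E` generated by the base `{Z(U) \ Z(K) : U open, K compact}`. -/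
instance instTopBPath : TopologicalSpace (BPath r s) :=
  TopologicalSpace.generateFrom
    {A | ∃ (U K : Set (FinPath r s)), IsOpen U ∧ IsCompact K ∧
      A = ZSet r s U \ ZSet r s K}

noncomputable instance instMeasBPath : MeasurableSpace (BPath r s) := borel _

end Topology

/-- The backwards shift on finite paths (acting as the identity on vertices). -/
def shiftF : FinPath r s → FinPath r s
  | ⟨0, v⟩ => ⟨0, v⟩
  | ⟨1, q⟩ => ⟨0, (s (q.1 ⟨0, Nat.one_pos⟩) : PathN r s 0)⟩
  | ⟨n + 2, q⟩ =>
    ⟨n + 1, ⟨fun i => q.1 i.succ, fun i j hij =>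
      q.2 i.succ j.succ (by simp [Fin.val_succ, hij])⟩⟩

/-- The backwards shift on the boundary path carrier. -/
def shiftC : BPathCarrier r s → BPathCarrier r s
  | .inl p => .inl (shiftF r s p)
  | .inr a => .inr ⟨fun i => a.1 (i + 1), fun i => a.2 (i + 1)⟩

section Vertex

variable [TopologicalSpace V] [TopologicalSpace E]

/-- The set of vertices `E⁰ ⊆ ∂E`. -/
def VtxSet : Set (BPath r s) := {x | ∃ v : V, x.val = Sum.inl ⟨0, (v : PathN r s 0)⟩}

/-- The range map `r : ∂E → E⁰`. -/
def brng (x : BPath r s) : V :=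
  match x.val with
  | .inl p => rngFin r s p.2
  | .inr a => r (a.1 0)

end Vertex

section Measures

variable [TopologicalSpace V] [TopologicalSpace E]
variable [MeasurableSpace V] [MeasurableSpace E]

/-- `ν` is the (sheaf-theoretic) pullback of `μ` along `f`. -/
def IsPullback {X Y : Type*} [TopologicalSpace X] [TopologicalSpace Y]
    [MeasurableSpace X] [MeasurableSpace Y] (f : X → Y)
    (ν : Measure X) (μ : Measure Y) : Prop :=
  ∀ U : Set X, IsOpen U → Set.InjOn f U →
    ∀ B : Set X, B ⊆ U → MeasurableSet B → ν B = μ (f '' B)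

/-- A measure `ν` on `∂E` is `β`-quasi-invariant: `σ*ν = e^β ν` on `∂E \ E⁰`, i.e.
`ν(B) = e^{-β} ν(σ(B))` for Borel `B` inside an open set `U ⊆ ∂E \ E⁰` on which `σ`
is injective. -/
def QuasiInv (β : ℝ) (ν : Measure (BPath r s)) : Prop :=
  ∀ U : Set (BPath r s), IsOpen U → Disjoint U (VtxSet r s) →
    Set.InjOn (fun x : BPath r s => shiftC r s x.val) U →
    ∀ B : Set (BPath r s), B ⊆ U → MeasurableSet B →
      ν B = ENNReal.ofReal (Real.exp (-β)) *
        ν (Subtype.val ⁻¹' (shiftC r s '' (Subtype.val '' B)))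

/-- A regular Borel measure `μ` on `E⁰` is `β`-sub-invariant: `Tμ ≤ e^β μ` with equality on
the regular vertices, where `T = r_* s*`. -/
def SubInv (β : ℝ) (μ : Measure V) : Prop :=
  μ.Regular ∧ ∃ sμ : Measure E, sμ.Regular ∧ IsPullback s sμ μ ∧
    Measure.map r sμ ≤ ENNReal.ofReal (Real.exp β) • μ ∧
    ∀ B : Set V, MeasurableSet B → (∀ v ∈ B, RegularVertex r v) →
      Measure.map r sμ B = ENNReal.ofReal (Real.exp β) * μ B

end Measures

section BPathN

variable [TopologicalSpace V] [TopologicalSpace E]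

/-- The `n`-th boundary path space `∂Eₙ = E⁰_sng ⊔ ⋯ ⊔ E^{n-1}_sng ⊔ E^n`. -/
def BPathN (n : ℕ) : Type u :=
  {p : FinPath r s // p.1 ≤ n ∧ (p.1 < n → ¬ RegularVertex r (srcFin r s p.2))}

/-- Cylinder sets in `∂Eₙ`. -/
def ZNSet (n : ℕ) (S : Set (FinPath r s)) : Set (BPathN r s n) :=
  {x | ∃ (k : ℕ) (h : k ≤ x.val.1), ftrunc r s x.val k h ∈ S}

instance instTopBPathN (n : ℕ) : TopologicalSpace (BPathN r s n) :=
  TopologicalSpace.generateFrom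
    {A | ∃ (U K : Set (FinPath r s)), IsOpen U ∧ IsCompact K ∧
      A = ZNSet r s n U \ ZNSet r s n K}

noncomputable instance instMeasBPathN (n : ℕ) : MeasurableSpace (BPathN r s n) := borel _

/-- The map `ρₙ : ∂Eₙ₊₁ → ∂Eₙ`, truncating paths of length `n+1` and fixing shorter paths. -/
def rho (n : ℕ) (x : BPathN r s (n + 1)) : BPathN r s n :=
  if h : x.val.1 = n + 1 then
    ⟨ftrunc r s x.val n (by omega), ⟨le_refl n, fun hlt => absurd hlt (lt_irrefl n)⟩⟩
  else
    ⟨x.val, ⟨by have := x.property.1; omega, fun hlt => x.property.2 (by omega)⟩⟩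

end BPathN

/-- The periodicity group of a boundary path. -/
def Per (x : BPathCarrier r s) : Set ℤ :=
  {z | ∃ k l : ℕ, (k : ℕ∞) ≤ blen r s x ∧ (l : ℕ∞) ≤ blen r s x ∧
    z = (k : ℤ) - (l : ℤ) ∧ (shiftC r s)^[k] x = (shiftC r s)^[l] x}

section Gpd

variable [TopologicalSpace V] [TopologicalSpace E]

/-- The graph groupoid `𝒢_E`, as a set of triples. -/
def GraphGpd : Set (BPath r s × ℤ × BPath r s) :=
  {t | ∃ k l : ℕ, (k : ℕ∞) ≤ blen r s t.1.val ∧ (l : ℕ∞) ≤ blen r s t.2.2.val ∧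
    t.2.1 = (k : ℤ) - (l : ℤ) ∧ (shiftC r s)^[k] t.1.val = (shiftC r s)^[l] t.2.2.val}

end Gpd

/-- The infinite path `c^∞` obtained by repeating a cycle `c`. -/
def cycInf {m : ℕ} (c : PathN r s (m + 1)) (hc : rngFin r s c = srcFin r s c) :
    PathInf r s :=
  ⟨fun i => c.1 ⟨i % (m + 1), Nat.mod_lt i (Nat.succ_pos m)⟩, by
    intro i
    have hlt : i % (m + 1) < m + 1 := Nat.mod_lt i (Nat.succ_pos m)
    show s (c.1 ⟨i % (m + 1), Nat.mod_lt i (Nat.succ_pos m)⟩) =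
      r (c.1 ⟨(i + 1) % (m + 1), Nat.mod_lt (i + 1) (Nat.succ_pos m)⟩)
    by_cases h1 : i % (m + 1) < m
    · have key : (i + 1) % (m + 1) = i % (m + 1) + 1 := by
        conv_lhs => rw [← Nat.div_add_mod i (m + 1)]
        rw [Nat.add_assoc, Nat.mul_add_mod, Nat.mod_eq_of_lt (by omega)]
      exact c.2 _ _ key
    · have h2 : i % (m + 1) = m := by omega
      have key : (i + 1) % (m + 1) = 0 := by
        conv_lhs => rw [← Nat.div_add_mod i (m + 1)]
        rw [Nat.add_assoc, Nat.mul_add_mod, h2, Nat.mod_self]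
      have e1 : (⟨i % (m + 1), Nat.mod_lt i (Nat.succ_pos m)⟩ : Fin (m + 1)) =
          ⟨m, Nat.lt_succ_self m⟩ := Fin.ext h2
      have e2 : (⟨(i + 1) % (m + 1), Nat.mod_lt (i + 1) (Nat.succ_pos m)⟩ : Fin (m + 1)) =
          ⟨0, Nat.succ_pos m⟩ := Fin.ext key
      rw [e1, e2]
      exact hc.symm⟩

/-- Prepending a finite path `b` to an infinite path `d` with `s(b) = r(d)`. -/
def prepend : ∀ {n : ℕ} (b : PathN r s n) (d : PathInf r s),
    srcFin r s b = r (d.1 0) → PathInf r s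
  | 0, _, d, _ => d
  | n + 1, b, d, h =>
    ⟨fun i => if h' : i < n + 1 then b.1 ⟨i, h'⟩ else d.1 (i - (n + 1)), by
      intro i
      show s (if h' : i < n + 1 then b.1 ⟨i, h'⟩ else d.1 (i - (n + 1))) =
        r (if h' : i + 1 < n + 1 then b.1 ⟨i + 1, h'⟩ else d.1 (i + 1 - (n + 1)))
      by_cases h1 : i + 1 < n + 1
      · rw [dif_pos (by omega : i < n + 1), dif_pos h1]
        exact b.2 ⟨i, by omega⟩ ⟨i + 1, h1⟩ rfl
      · by_cases h2 : i < n + 1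
        · rw [dif_pos h2, dif_neg h1]
          have hi : i = n := by omega
          have h0 : i + 1 - (n + 1) = 0 := by omega
          have e : (⟨i, h2⟩ : Fin (n + 1)) = ⟨n, Nat.lt_succ_self n⟩ := Fin.ext hi
          rw [h0, e]
          exact h
        · rw [dif_neg h2, dif_neg h1]
          have h3 : i + 1 - (n + 1) = (i - (n + 1)) + 1 := by omega
          rw [h3]
          exact d.2 (i - (n + 1))⟩

/-- `b` ends with `c`: `b = a·c` for some finite path `a`. -/
def EndsWith {n m : ℕ} (b : PathN r s n) (c : PathN r s m) : Prop :=
  ∃ h : m ≤ n, ∀ i : Fin m,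
    edgeOf r s b ⟨n - m + (i : ℕ), by have := i.isLt; omega⟩ = edgeOf r s c i

/-- `x` is eventually cyclic with cycle of length `m + 1`: `x = b c^∞` for a cycle `c` of
length `m+1` and an exit `b` of `c`. -/
def EvCyclicWitness (x : BPathCarrier r s) (m : ℕ) : Prop :=
  ∃ (c : PathN r s (m + 1)) (hc : rngFin r s c = srcFin r s c)
    (k : ℕ) (b : PathN r s k)
    (hlink : srcFin r s b = r ((cycInf r s c hc).1 0)),
    srcFin r s b = rngFin r s c ∧ ¬ EndsWith r s b c ∧
    x = Sum.inr (prepend r s b (cycInf r s c hc) hlink)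


/-!
The measure `μ = r_*ν` is finite on compact sets because the extended range map `r : ∂E → E⁰`
is proper, and a locally finite measure on a locally compact second-countable Hausdorff space is
regular. Properness is proved with ultrafilters: along an ultrafilter containing `r⁻¹(K)`, the
truncations to length `n` converge as long as they stay in compact sets of paths of length `n`.
This can only fail at a limit whose source is singular, because at a regular source the next
edges range in the compact set `r⁻¹(cl U)`. So the limits of the truncations assemble into a
singular finite or an infinite boundary path, which is a limit of the ultrafilter.

The pullback `s*μ` is `A ↦ e^β ν(Z(A))`, the pushforward of `e^β ν` along the first-edge map
of `∂E \ E⁰`. For `A` inside an open set on which `s` is injective, the shift maps `Z(A)`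
injectively onto `r⁻¹(s(A))`, so quasi-invariance gives `e^β ν(Z(A)) = μ(s(A))`. Finally
`T(s*μ)(B) = e^β ν(Z(r⁻¹(B))) = e^β ν(r⁻¹(B) \ E⁰) ≤ e^β μ(B)`, with equality when `B`
consists of regular vertices, since a regular vertex is not a boundary path.
-/

open Filter Topology

def brngC : BPathCarrier r s → V
  | .inl p => rngFin r s p.2
  | .inr a => r (a.1 0)

def truncF (k : ℕ) (p : FinPath r s) : FinPath r s :=
  ⟨min k p.1, truncFin r s (min_le_right _ _) p.2⟩

/-- The truncation `x(min n |x|)`; unlike `btrunc`, it needs no bound on `n`. -/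
def truncC (n : ℕ) : BPathCarrier r s → FinPath r s
  | .inl p => truncF r s n p
  | .inr a => ⟨n, truncInf r s a n⟩

lemma mk_truncFin_congr {m a b : ℕ} (q : PathN r s m) (ha : a ≤ m) (hb : b ≤ m) (hab : a = b) :
    (⟨a, truncFin r s ha q⟩ : FinPath r s) = ⟨b, truncFin r s hb q⟩ := by
  subst hab; rfl

lemma truncFin_truncFin {a b c : ℕ} (hab : a ≤ b) (hbc : b ≤ c) (q : PathN r s c) :
    truncFin r s hab (truncFin r s hbc q) = truncFin r s (hab.trans hbc) q := by
  match a, b, c, q with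
  | 0, 0, 0, _ | 0, 0, _ + 1, _ | 0, _ + 1, _ + 1, _ | _ + 1, _ + 1, _ + 1, _ => rfl
  | _ + 1, 0, _, _ | 0, _ + 1, 0, _ | _ + 1, _ + 1, 0, _ => omega

lemma truncFin_self {n : ℕ} (h : n ≤ n) (q : PathN r s n) : truncFin r s h q = q := by
  match n with
  | 0 | _ + 1 => rfl

lemma truncFin_zero {n : ℕ} (h : 0 ≤ n) (q : PathN r s n) :
    truncFin r s h q = rngFin r s q := by
  match n with
  | 0 | _ + 1 => rfl

lemma truncFin_truncInf {k n : ℕ} (h : k ≤ n) (a : PathInf r s) :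
    truncFin r s h (truncInf r s a n) = truncInf r s a k := by
  match k, n with
  | 0, 0 | 0, _ + 1 | _ + 1, _ + 1 => rfl
  | _ + 1, 0 => omega

lemma edgeOf_truncFin {a b : ℕ} (h : a ≤ b) (q : PathN r s b) (i : Fin a) :
    edgeOf r s (truncFin r s h q) i = edgeOf r s q (Fin.castLE h i) := by
  match a, b with
  | _ + 1, _ + 1 => rfl
  | 0, _ => exact i.elim0

lemma truncF_truncF {k n : ℕ} (hkn : k ≤ n) (p : FinPath r s) :
    truncF r s k (truncF r s n p) = truncF r s k p := by
  unfold truncF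
  rw [truncFin_truncFin]
  exact mk_truncFin_congr r s p.2 _ _ (by dsimp only; omega)

lemma truncF_truncC {k n : ℕ} (hkn : k ≤ n) (x : BPathCarrier r s) :
    truncF r s k (truncC r s n x) = truncC r s k x := by
  rcases x with p | a
  · exact truncF_truncF r s hkn p
  · unfold truncC truncF
    rw [truncFin_truncInf, min_eq_left hkn]

lemma truncF_of_fst_le {n : ℕ} {p : FinPath r s} (h : p.1 ≤ n) : truncF r s n p = p := by
  rw [truncF, mk_truncFin_congr r s p.2 _ le_rfl (min_eq_right h), truncFin_self]
  rfl

lemma truncC_zero (x : BPathCarrier r s) : truncC r s 0 x = ⟨0, brngC r s x⟩ := by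
  rcases x with p | a
  · rw [truncC, truncF, mk_truncFin_congr r s p.2 _ (Nat.zero_le _) (min_eq_left p.1.zero_le),
      truncFin_zero]
    rfl
  · rfl

lemma truncC_eq_btrunc {n : ℕ} {x : BPathCarrier r s} (h : (n : ℕ∞) ≤ blen r s x) :
    truncC r s n x = btrunc r s x n h := by
  rcases x with p | a
  · exact mk_truncFin_congr r s p.2 _ _ (min_eq_left (by simpa [blen] using h))
  · rfl

lemma fst_truncC_eq_iff {n : ℕ} {x : BPathCarrier r s} :
    (truncC r s n x).1 = n ↔ (n : ℕ∞) ≤ blen r s x := by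
  rcases x with p | a
  · simp [truncC, truncF, blen]
  · simp [truncC, blen]

lemma FinPath.exists_eq_mk {p : FinPath r s} {n : ℕ} (h : p.1 = n) :
    ∃ q : PathN r s n, p = ⟨n, q⟩ := by
  obtain ⟨m, q⟩ := p
  subst h
  exact ⟨q, rfl⟩

lemma r_last_eq_srcFin_truncFin {n : ℕ} (q : PathN r s (n + 1)) :
    r (q.1 (Fin.last n)) = srcFin r s (truncFin r s n.le_succ q) := by
  match n with
  | 0 => rfl
  | n + 1 => exact (q.2 ⟨n, by omega⟩ (Fin.last (n + 1)) rfl).symm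

lemma exists_truncInf_eq (Q : ∀ n, PathN r s n)
    (hQ : ∀ k n (h : k ≤ n), truncFin r s h (Q n) = Q k) :
    ∃ a : PathInf r s, ∀ n, truncInf r s a n = Q n := by
  let a : ℕ → E := fun i => (Q (i + 1)).1 (Fin.last i)
  have ha : ∀ n i (hi : i < n + 1), (Q (n + 1)).1 ⟨i, hi⟩ = a i := fun n i hi => by
    change _ = (Q (i + 1)).1 (Fin.last i)
    rw [← hQ (i + 1) (n + 1) (by omega)]
    rfl
  have hcomp : ∀ i, s (a i) = r (a (i + 1)) := fun i => by
    rw [← ha (i + 1) i (by omega), ← ha (i + 1) (i + 1) (by omega)]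
    exact (Q (i + 2)).2 _ _ rfl
  refine ⟨⟨a, hcomp⟩, fun n => ?_⟩
  match n with
  | 0 =>
    rw [← hQ 0 1 (Nat.zero_le 1), truncFin_zero]
    rfl
  | n + 1 => exact Subtype.ext (funext fun i => (ha n i i.2).symm)

def firstEdgeC : ∀ x : BPathCarrier r s, 1 ≤ blen r s x → E
  | .inl ⟨0, _⟩, h => absurd h (by simp [blen])
  | .inl ⟨_ + 1, q⟩, _ => q.1 0
  | .inr a, _ => a.1 0

lemma r_firstEdgeC (x : BPathCarrier r s) (hx : 1 ≤ blen r s x) :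
    r (firstEdgeC r s x hx) = brngC r s x := by
  match x with
  | .inl ⟨0, _⟩ => simp [blen] at hx
  | .inl ⟨_ + 1, _⟩ | .inr _ => rfl

lemma brngC_shiftC (x : BPathCarrier r s) (hx : 1 ≤ blen r s x) :
    brngC r s (shiftC r s x) = s (firstEdgeC r s x hx) := by
  match x with
  | .inl ⟨0, _⟩ => simp [blen] at hx
  | .inl ⟨1, _⟩ => rfl
  | .inl ⟨_ + 2, q⟩ => exact (q.2 0 1 rfl).symm
  | .inr a => exact (a.2 0).symm

lemma truncC_one (x : BPathCarrier r s) (hx : 1 ≤ blen r s x) :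
    ∃ q : PathN r s 1, truncC r s 1 x = ⟨1, q⟩ ∧ q.1 0 = firstEdgeC r s x hx := by
  match x with
  | .inl ⟨0, _⟩ => simp [blen] at hx
  | .inl ⟨n + 1, q⟩ =>
    exact ⟨truncFin r s (Nat.le_add_left 1 n) q,
      mk_truncFin_congr r s q (min_le_right 1 (n + 1)) _ (by omega), rfl⟩
  | .inr a => exact ⟨truncInf r s a 1, rfl, rfl⟩

def consP {n : ℕ} (e : E) (p : PathN r s n) (h : s e = rngFin r s p) : PathN r s (n + 1) :=
  match n, p, h with
  | 0, _, _ => ⟨fun _ => e, fun i j hij => by simp [Fin.fin_one_eq_zero j] at hij⟩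
  | _ + 1, q, h => ⟨Fin.cons e q.1, fun i j hij => by
      obtain ⟨i, _⟩ := i
      obtain ⟨j, _⟩ := j
      obtain rfl : j = i + 1 := hij
      cases i with
      | zero => exact h
      | succ k => exact q.2 ⟨k, by omega⟩ ⟨k + 1, by omega⟩ rfl⟩

lemma srcFin_consP {n : ℕ} (e : E) (p : PathN r s n) (h : s e = rngFin r s p) :
    srcFin r s (consP r s e p h) = srcFin r s p := by
  match n with
  | 0 => exact h
  | _ + 1 => rfl

def consC (e : E) : ∀ x : BPathCarrier r s, s e = brngC r s x → BPathCarrier r s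
  | .inl p, h => .inl ⟨p.1 + 1, consP r s e p.2 h⟩
  | .inr a, h => .inr ⟨fun | 0 => e | i + 1 => a.1 i, fun | 0 => h | i + 1 => a.2 i⟩

lemma exists_eq_inl_of_consC_eq_inl {e : E} {x : BPathCarrier r s} {h : s e = brngC r s x}
    {p : FinPath r s} (hp : consC r s e x h = .inl p) :
    ∃ q, x = .inl q ∧ srcFin r s p.2 = srcFin r s q.2 := by
  rcases x with q | a
  · obtain rfl := Sum.inl_injective hp
    exact ⟨q, rfl, srcFin_consP r s e q.2 h⟩
  · cases hp

lemma one_le_blen_consC (e : E) (x : BPathCarrier r s) (h : s e = brngC r s x) :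
    1 ≤ blen r s (consC r s e x h) := by
  rcases x with p | a
  · simp [consC, blen]
  · simp [consC, blen]

lemma firstEdgeC_consC (e : E) (x : BPathCarrier r s) (h : s e = brngC r s x) :
    firstEdgeC r s (consC r s e x h) (one_le_blen_consC r s e x h) = e := by
  match x with
  | .inl ⟨0, _⟩ | .inl ⟨_ + 1, _⟩ | .inr _ => rfl

lemma shiftC_consC (e : E) (x : BPathCarrier r s) (h : s e = brngC r s x) :
    shiftC r s (consC r s e x h) = x := by
  match x with
  | .inl ⟨0, _⟩ => exact congrArg Sum.inl (congrArg (Sigma.mk 0) h)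
  | .inl ⟨_ + 1, _⟩ | .inr _ => rfl

lemma consC_firstEdgeC_shiftC (x : BPathCarrier r s) (hx : 1 ≤ blen r s x) :
    consC r s (firstEdgeC r s x hx) (shiftC r s x) (brngC_shiftC r s x hx).symm = x := by
  match x with
  | .inl ⟨0, _⟩ => simp [blen] at hx
  | .inl ⟨1, _⟩ => exact congrArg Sum.inl (congrArg (Sigma.mk 1) (Subtype.ext (funext fun i => by
      obtain rfl := Fin.fin_one_eq_zero i
      rfl)))
  | .inl ⟨_ + 2, _⟩ =>
    exact congrArg Sum.inl (congrArg (Sigma.mk _) (Subtype.ext (funext fun i => by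
      cases i using Fin.cases <;> rfl)))
  | .inr a => exact congrArg Sum.inr (Subtype.ext (funext fun | 0 => rfl | _ + 1 => rfl))

lemma eq_of_firstEdgeC_eq_of_shiftC_eq {x y : BPathCarrier r s} (hx : 1 ≤ blen r s x)
    (hy : 1 ≤ blen r s y) (he : firstEdgeC r s x hx = firstEdgeC r s y hy)
    (hσ : shiftC r s x = shiftC r s y) : x = y := by
  rw [← consC_firstEdgeC_shiftC r s x hx, ← consC_firstEdgeC_shiftC r s y hy]
  congr 1

section Topology

variable [TopologicalSpace V] [TopologicalSpace E]

instance : BorelSpace (BPath r s) := ⟨rfl⟩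

lemma brng_eq_brngC (x : BPath r s) : brng r s x = brngC r s x.val := rfl

def truncB (n : ℕ) (x : BPath r s) : FinPath r s := truncC r s n x.val

lemma mem_ZSet_iff {S : Set (FinPath r s)} {x : BPath r s} :
    x ∈ ZSet r s S ↔ ∃ n : ℕ, (n : ℕ∞) ≤ blen r s x.val ∧ truncB r s n x ∈ S := by
  refine exists_congr fun n => ⟨fun ⟨h, hS⟩ => ⟨h, ?_⟩, fun ⟨h, hS⟩ => ⟨h, ?_⟩⟩ <;>
    rwa [truncB, truncC_eq_btrunc r s h] at *

lemma ZSet_eq_iUnion (S : Set (FinPath r s)) :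
    ZSet r s S = ⋃ j : ℕ, truncB r s j ⁻¹' (S ∩ {p | p.1 = j}) := by
  ext x
  simp only [mem_ZSet_iff, mem_iUnion, mem_preimage, mem_inter_iff, mem_ofPred_eq, truncB,
    fst_truncC_eq_iff, and_comm]

lemma ZSet_eq_preimage_truncB {j : ℕ} {S : Set (FinPath r s)} (hS : S ⊆ {p | p.1 = j}) :
    ZSet r s S = truncB r s j ⁻¹' S := by
  rw [ZSet_eq_iUnion]
  refine (iUnion_subset fun n x hx => ?_).antisymm ?_
  · obtain rfl : n = j := hx.2.symm.trans (hS hx.1)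
    exact hx.1
  · exact fun x hx => mem_iUnion.2 ⟨j, hx, hS hx⟩

instance instT2PathN [T2Space V] [T2Space E] : ∀ n : ℕ, T2Space (PathN r s n)
  | 0 => inferInstanceAs (T2Space V)
  | n + 1 => inferInstanceAs (T2Space {a : Fin (n + 1) → E // Comp r s (n + 1) a})

instance [T2Space V] [T2Space E] : T2Space (FinPath r s) :=
  inferInstanceAs (T2Space (Σ n : ℕ, PathN r s n))

lemma isClopen_setOf_fst_eq (j : ℕ) : IsClopen {p : FinPath r s | p.1 = j} := by
  rw [show {p : FinPath r s | p.1 = j} = range (Sigma.mk j) from (range_sigmaMk j).symm]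
  exact isClopen_range_sigmaMk

lemma continuous_edge {n : ℕ} (i : Fin (n + 1)) :
    Continuous fun q : PathN r s (n + 1) => q.1 i :=
  (continuous_apply i).comp continuous_subtype_val

lemma continuous_edgeOf {n : ℕ} (i : Fin n) : Continuous fun q : PathN r s n => edgeOf r s q i := by
  match n with
  | _ + 1 => exact continuous_edge r s i

lemma continuous_truncFin (hr : Continuous r) {a b : ℕ} (h : a ≤ b) :
    Continuous (truncFin r s h : PathN r s b → PathN r s a) := by
  match a, b with
  | 0, 0 => exact continuous_id
  | 0, _ + 1 => exact hr.comp (continuous_edge r s _)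
  | _ + 1, _ + 1 => exact (continuous_pi fun i => continuous_edge r s _).subtype_mk _
  | _ + 1, 0 => omega

lemma continuous_truncF (hr : Continuous r) (k : ℕ) : Continuous (truncF r s k) :=
  continuous_sigma fun m => by
    change Continuous fun q : PathN r s m => (⟨_, truncFin r s (min_le_right k m) q⟩ : FinPath r s)
    exact continuous_sigmaMk.comp (continuous_truncFin r s hr _)

lemma continuous_srcFin_snd (hs : Continuous s) :
    Continuous fun p : FinPath r s => srcFin r s p.2 :=
  continuous_sigma fun m => match m with
    | 0 => continuous_id
    | _ + 1 => hs.comp (continuous_edge r s _)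

lemma isClosed_setOf_comp [T2Space V] (hr : Continuous r) (hs : Continuous s) (n : ℕ) :
    IsClosed {a : Fin n → E | Comp r s n a} := by
  simp only [Comp, ofPred_forall]
  exact isClosed_iInter fun i => isClosed_iInter fun j => isClosed_iInter fun _ =>
    isClosed_eq (hs.comp (continuous_apply i)) (hr.comp (continuous_apply j))

lemma isOpen_setOf_regularVertex : IsOpen {v : V | RegularVertex r v} := by
  refine isOpen_iff_forall_mem_open.2 fun v ⟨U, hU, hv, hU'⟩ => ⟨U, ?_, hU, hv⟩
  exact fun w hw => ⟨U, hU, hw, hU'⟩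

lemma isCompact_setOf_truncFin_mem_last_mem [T2Space V] [T2Space E] (hr : Continuous r)
    (hs : Continuous s) {n : ℕ} {D : Set (PathN r s n)} (hD : IsCompact D) {W : Set E}
    (hW : IsCompact W) :
    IsCompact {q : PathN r s (n + 1) |
      truncFin r s n.le_succ q ∈ D ∧ q.1 (Fin.last n) ∈ W} := by
  let edgeRange : Fin (n + 1) → Set E :=
    Fin.lastCases W fun i => (fun d => edgeOf r s d i) '' D
  have hedgeRange : ∀ i, IsCompact (edgeRange i) := Fin.lastCases (by simpa [edgeRange] using hW)
    fun i => by simpa [edgeRange] using hD.image (continuous_edgeOf r s i)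
  have hbox : IsCompact (Subtype.val ⁻¹' univ.pi edgeRange : Set (PathN r s (n + 1))) :=
    (isClosed_setOf_comp r s hr hs (n + 1)).isClosedEmbedding_subtypeVal.isCompact_preimage
      (isCompact_univ_pi hedgeRange)
  refine hbox.of_isClosed_subset ?_ fun q ⟨hqD, hqW⟩ i _ => ?_
  · exact (hD.isClosed.preimage (continuous_truncFin r s hr _)).inter
      (hW.isClosed.preimage (continuous_edge r s _))
  · induction i using Fin.lastCases with
    | last => simpa [edgeRange] using hqW
    | cast i =>
      simp only [edgeRange, Fin.lastCases_castSucc]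
      exact ⟨_, hqD, edgeOf_truncFin r s _ q i⟩

lemma isOpen_ZSet {U : Set (FinPath r s)} (hU : IsOpen U) : IsOpen (ZSet r s U) := by
  refine TopologicalSpace.isOpen_generateFrom_of_mem ⟨U, ∅, hU, isCompact_empty, ?_⟩
  simp [ZSet]

lemma le_nhds_of_forall_ZSet_diff_mem {F : Filter (BPath r s)} {x : BPath r s}
    (h : ∀ U K : Set (FinPath r s), IsOpen U → IsCompact K →
      x ∈ ZSet r s U \ ZSet r s K → ZSet r s U \ ZSet r s K ∈ F) :
    F ≤ 𝓝 x := by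
  change Tendsto id F (@nhds _ (TopologicalSpace.generateFrom _) x)
  rw [TopologicalSpace.tendsto_nhds_generateFrom_iff]
  rintro _ ⟨U, K, hU, hK, rfl⟩ hx
  exact h U K hU hK hx

lemma brng_preimage_eq_ZSet (W : Set V) :
    brng r s ⁻¹' W = ZSet r s (Sigma.mk 0 '' (show Set (PathN r s 0) from W)) := by
  rw [ZSet_eq_preimage_truncB r s (by rintro _ ⟨v, _, rfl⟩; rfl)]
  ext x
  simp only [mem_preimage, truncB, truncC_zero, brng_eq_brngC]
  exact (sigma_mk_injective.mem_set_image (s := show Set (PathN r s 0) from W)).symm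

lemma continuous_brng : Continuous (brng r s) :=
  continuous_def.2 fun W hW => by
    rw [brng_preimage_eq_ZSet]
    exact isOpen_ZSet r s (isOpenMap_sigmaMk _ hW)

section Compactness

variable {r s} {F : Ultrafilter (BPath r s)}

def TightAt (F : Ultrafilter (BPath r s)) (n : ℕ) : Prop :=
  ∃ C : Set (FinPath r s), IsCompact C ∧ C ⊆ {p | p.1 = n} ∧ truncB r s n ⁻¹' C ∈ F

/-- A junk value unless the truncations converge, as they do under `TightAt F n`. -/
noncomputable def truncLim (F : Ultrafilter (BPath r s)) (n : ℕ) : FinPath r s :=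
  (F.map (truncB r s n)).lim

lemma tightAt_zero {K : Set V} (hK : IsCompact K) (hKF : brng r s ⁻¹' K ∈ F) : TightAt F 0 := by
  refine ⟨Sigma.mk 0 '' (show Set (PathN r s 0) from K), hK.image continuous_sigmaMk,
    by rintro _ ⟨v, _, rfl⟩; rfl, ?_⟩
  rwa [← ZSet_eq_preimage_truncB r s (by rintro _ ⟨v, _, rfl⟩; rfl), ← brng_preimage_eq_ZSet]

lemma TightAt.mono (hr : Continuous r) {k n : ℕ} (hkn : k ≤ n) (h : TightAt F n) :
    TightAt F k := by
  obtain ⟨C, hC, hCn, hCF⟩ := h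
  refine ⟨truncF r s k '' C, hC.image (continuous_truncF r s hr k), ?_, ?_⟩
  · rintro _ ⟨p, hp, rfl⟩
    exact min_eq_left ((hCn hp).symm ▸ hkn)
  · exact mem_of_superset hCF fun x hx => ⟨_, hx, truncF_truncC r s hkn x.val⟩

lemma TightAt.tendsto {n : ℕ} (h : TightAt F n) :
    Tendsto (truncB r s n) F (𝓝 (truncLim F n)) := by
  obtain ⟨C, hC, -, hCF⟩ := h
  obtain ⟨q, -, hq⟩ := hC.ultrafilter_le_nhds (F.map (truncB r s n)) (le_principal_iff.2 hCF)
  exact le_nhds_lim ⟨q, hq⟩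

lemma TightAt.eventually_le_blen {n : ℕ} (h : TightAt F n) :
    ∀ᶠ x in (F : Filter (BPath r s)), (n : ℕ∞) ≤ blen r s x.val := by
  obtain ⟨C, -, hCn, hCF⟩ := h
  exact mem_of_superset hCF fun x hx => (fst_truncC_eq_iff r s).1 (hCn hx)

lemma TightAt.fst_truncLim {n : ℕ} (h : TightAt F n) : (truncLim F n).1 = n :=
  (isClopen_setOf_fst_eq r s n).isClosed.mem_of_tendsto h.tendsto
    (h.eventually_le_blen.mono fun _ hx => (fst_truncC_eq_iff r s).2 hx)

lemma TightAt.truncF_truncLim [T2Space V] [T2Space E] (hr : Continuous r) {k n : ℕ} (hkn : k ≤ n)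
    (h : TightAt F n) :
    truncF r s k (truncLim F n) = truncLim F k := by
  refine tendsto_nhds_unique ?_ (h.mono hr hkn).tendsto
  have := ((continuous_truncF r s hr k).tendsto _).comp h.tendsto
  rwa [show truncF r s k ∘ truncB r s n = truncB r s k from
    funext fun x => truncF_truncC r s hkn x.val] at this

lemma not_regularVertex_srcFin_truncLim (hs : Continuous s) {n : ℕ} (h : TightAt F n)
    (hshort : ∀ᶠ x in (F : Filter (BPath r s)), blen r s x.val ≤ n) :
    ¬ RegularVertex r (srcFin r s (truncLim F n).2) := by
  refine (isOpen_setOf_regularVertex r).isClosed_compl.preimage (continuous_srcFin_snd r s hs)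
    |>.mem_of_tendsto h.tendsto (hshort.mono fun x hx => ?_)
  obtain ⟨p | a, hx'⟩ := x
  · have hpn : p.1 ≤ n := by simpa [blen] using hx
    simpa [truncB, truncC, truncF_of_fst_le r s hpn] using hx' p rfl
  · simp [blen] at hx

lemma TightAt.succ [T2Space V] [T2Space E] (hr : Continuous r) (hs : Continuous s) {n : ℕ}
    (h : TightAt F n)
    (hlong : ∀ᶠ x in (F : Filter (BPath r s)), (n : ℕ∞) < blen r s x.val)
    (hreg : RegularVertex r (srcFin r s (truncLim F n).2)) : TightAt F (n + 1) := by
  obtain ⟨U, hU, hvU, -, hUc, -⟩ := hreg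
  obtain ⟨C, hC, -, hCF⟩ := id h
  refine ⟨Sigma.mk (n + 1) '' {q | truncFin r s n.le_succ q ∈ Sigma.mk n ⁻¹' C ∧
      q.1 (Fin.last n) ∈ r ⁻¹' closure U},
    (isCompact_setOf_truncFin_mem_last_mem r s hr hs
      (Topology.IsClosedEmbedding.sigmaMk.isCompact_preimage hC) hUc).image continuous_sigmaMk,
    by rintro _ ⟨q, -, rfl⟩; rfl, ?_⟩
  have hsrc : ∀ᶠ x in (F : Filter (BPath r s)), srcFin r s (truncB r s n x).2 ∈ U :=
    h.tendsto ((hU.preimage (continuous_srcFin_snd r s hs)).mem_nhds hvU)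
  filter_upwards [hsrc, hCF, hlong] with x hxU hxC hxlen
  obtain ⟨q, hq⟩ : ∃ q : PathN r s (n + 1), truncB r s (n + 1) x = ⟨n + 1, q⟩ :=
    FinPath.exists_eq_mk r s ((fst_truncC_eq_iff r s).2
      (by simpa using Order.add_one_le_of_lt hxlen))
  have htr : truncB r s n x = ⟨n, truncFin r s n.le_succ q⟩ := by
    have := truncF_truncC r s n.le_succ x.val
    change truncF r s n (truncB r s (n + 1) x) = truncB r s n x at this
    rw [← this, hq]
    exact mk_truncFin_congr r s q _ _ (by simp)
  rw [mem_preimage, htr] at hxC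
  rw [htr] at hxU
  rw [mem_preimage, hq]
  refine ⟨q, ⟨hxC, ?_⟩, rfl⟩
  rw [mem_preimage, r_last_eq_srcFin_truncFin r s q]
  exact subset_closure hxU

lemma le_nhds_of_tendsto_truncB [T2Space V] [T2Space E] {x : BPath r s}
    (hlim : ∀ n : ℕ, (n : ℕ∞) ≤ blen r s x.val →
      Tendsto (truncB r s n) F (𝓝 (truncB r s n x)))
    (hnot : ∀ j : ℕ, blen r s x.val < j → ¬ TightAt F j) : ↑F ≤ 𝓝 x := by
  refine le_nhds_of_forall_ZSet_diff_mem r s fun U K hU hK ⟨hxU, hxK⟩ => ?_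
  refine sdiff_eq _ _ ▸ inter_mem ?_ (F.compl_mem_iff_notMem.2 fun hKF => ?_)
  · obtain ⟨n, hn, hxn⟩ := (mem_ZSet_iff r s).1 hxU
    have hlevel : IsOpen (U ∩ {p | p.1 = n}) := hU.inter (isClopen_setOf_fst_eq r s n).isOpen
    refine mem_of_superset (hlim n hn (hlevel.mem_nhds ⟨hxn, (fst_truncC_eq_iff r s).2 hn⟩))
      fun y hy => ?_
    rw [← ZSet_eq_preimage_truncB r s inter_subset_right] at hy
    obtain ⟨m, hm, hym⟩ := hy
    exact ⟨m, hm, hym.1⟩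
  · have hfin : (Sigma.fst '' K).Finite :=
      (hK.image (continuous_sigma fun _ => continuous_const)).finite_of_discrete
    have hKF' : ⋃ j ∈ Sigma.fst '' K, truncB r s j ⁻¹' (K ∩ {p | p.1 = j}) ∈ F := by
      refine mem_of_superset hKF fun y hy => ?_
      obtain ⟨j, hj⟩ := mem_iUnion.1 (ZSet_eq_iUnion r s K ▸ hy)
      exact mem_biUnion ⟨_, hj.1, hj.2⟩ hj
    obtain ⟨j, -, hj⟩ := (Ultrafilter.finite_biUnion_mem_iff hfin).1 hKF'
    rcases le_or_gt (j : ℕ∞) (blen r s x.val) with hjx | hjx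
    · refine hxK (ZSet_eq_iUnion r s K ▸ mem_iUnion.2 ⟨j, ?_⟩)
      exact (hK.isClosed.inter (isClopen_setOf_fst_eq r s j).isClosed).mem_of_tendsto
        (hlim j hjx) hj
    · exact hnot j hjx ⟨_, hK.inter_right (isClopen_setOf_fst_eq r s j).isClosed,
        inter_subset_right, hj⟩

lemma exists_le_nhds_of_forall_tightAt [T2Space V] [T2Space E] (hr : Continuous r)
    (h : ∀ n, TightAt F n) : ∃ x : BPath r s, ↑F ≤ 𝓝 x := by
  choose Q hQ using fun n => FinPath.exists_eq_mk r s (h n).fst_truncLim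
  obtain ⟨a, ha⟩ := exists_truncInf_eq r s Q fun k n hkn => by
    have := (h n).truncF_truncLim hr hkn
    rw [hQ n, hQ k] at this
    exact sigma_mk_injective ((mk_truncFin_congr r s (Q n) (min_le_right k n) hkn
      (min_eq_left hkn)).symm.trans this)
  refine ⟨⟨.inr a, fun p hp => nomatch hp⟩, le_nhds_of_tendsto_truncB (fun n _ => ?_) ?_⟩
  · change Tendsto (truncB r s n) F (𝓝 ⟨n, truncInf r s a n⟩)
    rw [ha, ← hQ]
    exact (h n).tendsto
  · exact fun j hj => absurd hj (by simp [blen])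

lemma exists_le_nhds_of_tightAt_of_not_tightAt_succ [T2Space V] [T2Space E] (hr : Continuous r)
    (hs : Continuous s) {m : ℕ} (hm : TightAt F m) (hm1 : ¬ TightAt F (m + 1)) :
    ∃ x : BPath r s, ↑F ≤ 𝓝 x := by
  have hsing : ¬ RegularVertex r (srcFin r s (truncLim F m).2) := by
    rcases F.eventually_or.1 (Eventually.of_forall fun x => le_or_gt (blen r s x.val) m) with
      hshort | hlong
    · exact not_regularVertex_srcFin_truncLim hs hm hshort
    · exact fun hreg => hm1 (hm.succ hr hs hlong hreg)
  have hlen : blen r s (.inl (truncLim F m)) = m := by simp [blen, hm.fst_truncLim]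
  refine ⟨⟨.inl (truncLim F m), fun p hp => Sum.inl_injective hp ▸ hsing⟩,
    le_nhds_of_tendsto_truncB (fun n hn => ?_) fun j hj hjF => ?_⟩
  · have hnm : n ≤ m := by simpa [hlen] using hn
    change Tendsto _ _ (𝓝 (truncF r s n (truncLim F m)))
    rw [hm.truncF_truncLim hr hnm]
    exact (hm.mono hr hnm).tendsto
  · exact hm1 (hjF.mono hr (Nat.succ_le_of_lt (by simpa [hlen] using hj)))

end Compactness

theorem isCompact_preimage_brng [T2Space V] [T2Space E] (hr : Continuous r) (hs : Continuous s)
    {K : Set V} (hK : IsCompact K) : IsCompact (brng r s ⁻¹' K) := by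
  refine isCompact_iff_ultrafilter_le_nhds.2 fun F hF => ?_
  rw [le_principal_iff] at hF
  obtain ⟨x, hx⟩ : ∃ x : BPath r s, ↑F ≤ 𝓝 x := by
    by_cases hall : ∀ n, TightAt F n
    · exact exists_le_nhds_of_forall_tightAt hr hall
    · obtain ⟨m, hm, hm1⟩ : ∃ m, TightAt F m ∧ ¬ TightAt F (m + 1) := by
        by_contra! hstep
        exact hall fun n => Nat.rec (tightAt_zero hK hF) hstep n
      exact exists_le_nhds_of_tightAt_of_not_tightAt_succ hr hs hm hm1
  exact ⟨x, hK.isClosed.mem_of_tendsto (((continuous_brng r s).tendsto x).comp hx) hF, hx⟩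

lemma isFiniteMeasureOnCompacts_map_brng [T2Space V] [T2Space E] [MeasurableSpace V]
    [BorelSpace V] (hr : Continuous r) (hs : Continuous s) (ν : Measure (BPath r s))
    [IsFiniteMeasureOnCompacts ν] :
    IsFiniteMeasureOnCompacts (ν.map (brng r s)) :=
  ⟨fun K hK => by
    rw [Measure.map_apply (continuous_brng r s).measurable hK.isClosed.measurableSet]
    exact (isCompact_preimage_brng r s hr hs hK).measure_lt_top⟩

end Topology

section EdgeCylinders

variable [TopologicalSpace V] [TopologicalSpace E]

def posLength : Set (BPath r s) := {x | 1 ≤ blen r s x.val}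

def firstEdge (x : posLength r s) : E := firstEdgeC r s x.1.val x.2

/-- The cylinder set `Z(A)` of a set `A ⊆ E¹` of edges. -/
def edgeCyl (A : Set E) : Set (BPath r s) :=
  ZSet r s (Sigma.mk 1 '' {q : PathN r s 1 | q.1 0 ∈ A})

lemma mem_edgeCyl {A : Set E} {x : BPath r s} :
    x ∈ edgeCyl r s A ↔ ∃ hx : 1 ≤ blen r s x.val, firstEdgeC r s x.val hx ∈ A := by
  rw [edgeCyl, ZSet_eq_preimage_truncB r s (by rintro _ ⟨q, -, rfl⟩; rfl)]
  constructor
  · rintro ⟨q, hqA, hq⟩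
    have hx : 1 ≤ blen r s x.val := by
      simpa using (fst_truncC_eq_iff r s).1 (congrArg Sigma.fst hq).symm
    obtain ⟨q', hq', hq'e⟩ := truncC_one r s x.val hx
    obtain rfl : q = q' := sigma_mk_injective (hq.trans hq')
    exact ⟨hx, by rwa [← hq'e]⟩
  · rintro ⟨hx, hxA⟩
    obtain ⟨q, hq, hqe⟩ := truncC_one r s x.val hx
    exact ⟨q, show q.1 0 ∈ A by rwa [hqe], hq.symm⟩

lemma edgeCyl_eq_image (A : Set E) :
    edgeCyl r s A = Subtype.val '' (firstEdge r s ⁻¹' A) := by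
  ext x
  rw [mem_edgeCyl]
  exact ⟨fun ⟨hx, h⟩ => ⟨⟨x, hx⟩, h, rfl⟩, by rintro ⟨⟨x, hx⟩, h, rfl⟩; exact ⟨hx, h⟩⟩

lemma edgeCyl_mono {A B : Set E} (h : A ⊆ B) : edgeCyl r s A ⊆ edgeCyl r s B :=
  fun _ hx => have ⟨hx, hxA⟩ := (mem_edgeCyl r s).1 hx; (mem_edgeCyl r s).2 ⟨hx, h hxA⟩

lemma isOpen_edgeCyl {U : Set E} (hU : IsOpen U) : IsOpen (edgeCyl r s U) :=
  isOpen_ZSet r s (isOpenMap_sigmaMk _ (hU.preimage (continuous_edge r s 0)))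

lemma isOpen_posLength : IsOpen (posLength r s) := by
  convert isOpen_edgeCyl r s isOpen_univ
  ext x
  simp [mem_edgeCyl, posLength]

lemma continuous_firstEdge : Continuous (firstEdge r s) :=
  continuous_def.2 fun U hU => by
    rw [← Subtype.val_injective.preimage_image (firstEdge r s ⁻¹' U), ← edgeCyl_eq_image]
    exact (isOpen_edgeCyl r s hU).preimage continuous_subtype_val

lemma disjoint_edgeCyl_vtxSet (A : Set E) : Disjoint (edgeCyl r s A) (VtxSet r s) := by
  refine disjoint_left.2 fun x hx ⟨v, hv⟩ => ?_
  obtain ⟨h1, -⟩ := (mem_edgeCyl r s).1 hx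
  simp [hv, blen] at h1

lemma injOn_shiftC_edgeCyl {U : Set E} (hU : InjOn s U) :
    InjOn (fun x : BPath r s => shiftC r s x.val) (edgeCyl r s U) := by
  intro x hx y hy (hxy : shiftC r s x.val = shiftC r s y.val)
  obtain ⟨hx1, hxU⟩ := (mem_edgeCyl r s).1 hx
  obtain ⟨hy1, hyU⟩ := (mem_edgeCyl r s).1 hy
  refine Subtype.ext (eq_of_firstEdgeC_eq_of_shiftC_eq r s hx1 hy1 (hU hxU hyU ?_) hxy)
  rw [← brngC_shiftC r s _ hx1, ← brngC_shiftC r s _ hy1, hxy]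

def consB (e : E) (y : BPath r s) (h : s e = brng r s y) : BPath r s :=
  ⟨consC r s e y.val h, fun p hp => by
    obtain ⟨q, hq, hsrc⟩ := exists_eq_inl_of_consC_eq_inl r s hp
    rw [hsrc]
    exact y.2 q hq⟩

lemma preimage_shiftC_image_edgeCyl (A : Set E) :
    Subtype.val ⁻¹' (shiftC r s '' (Subtype.val '' edgeCyl r s A)) = brng r s ⁻¹' (s '' A) := by
  ext y
  constructor
  · rintro ⟨_, ⟨x, hx, rfl⟩, hxy⟩
    obtain ⟨hx1, hxA⟩ := (mem_edgeCyl r s).1 hx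
    refine ⟨_, hxA, ?_⟩
    change _ = brngC r s y.val
    rw [← hxy, brngC_shiftC]
  · rintro ⟨e, heA, he⟩
    refine ⟨_, ⟨consB r s e y he, ?_, rfl⟩, shiftC_consC r s e y.val he⟩
    refine (mem_edgeCyl r s).2 ⟨one_le_blen_consC r s e y.val he, ?_⟩
    exact (firstEdgeC_consC r s e y.val he).symm ▸ heA

lemma one_le_blen_of_regularVertex {x : BPath r s} (h : RegularVertex r (brng r s x)) :
    1 ≤ blen r s x.val := by
  obtain ⟨⟨_ | n, q⟩ | a, hx⟩ := x
  · exact absurd h (hx _ rfl)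
  · simp [blen]
  · simp [blen]

lemma edgeCyl_preimage_r (B : Set V) :
    edgeCyl r s (r ⁻¹' B) = brng r s ⁻¹' B ∩ posLength r s := by
  ext x
  simp only [mem_edgeCyl, mem_preimage, r_firstEdgeC, brng_eq_brngC, mem_inter_iff, posLength,
    mem_ofPred_eq, exists_prop, and_comm]

end EdgeCylinders

lemma _root_.IsLocalHomeomorph.measurableSet_image {X Y : Type*} [TopologicalSpace X]
    [TopologicalSpace Y] [MeasurableSpace X] [BorelSpace X] [MeasurableSpace Y] [BorelSpace Y]
    {f : X → Y} (hf : IsLocalHomeomorph f) {U : Set X} (hU : IsOpen U) (hinj : InjOn f U)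
    {A : Set X} (hAU : A ⊆ U) (hA : MeasurableSet A) : MeasurableSet (f '' A) := by
  have hemb : Topology.IsOpenEmbedding (U.domRestrict f) :=
    (hf.comp hU.isOpenEmbedding_subtypeVal.isLocalHomeomorph).isOpenEmbedding_of_injective
      hinj.injective
  have himage : U.domRestrict f '' (Subtype.val ⁻¹' A) = f '' A := by
    rw [domRestrict_eq, image_comp, Subtype.image_preimage_coe, inter_eq_self_of_subset_right hAU]
  exact himage ▸ hemb.measurableEmbedding.measurableSet_image.2 (measurable_subtype_coe hA)

section Measure

variable [TopologicalSpace V] [TopologicalSpace E] [MeasurableSpace E] [BorelSpace E]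

lemma measurableSet_edgeCyl {A : Set E} (hA : MeasurableSet A) :
    MeasurableSet (edgeCyl r s A) :=
  edgeCyl_eq_image r s A ▸ (isOpen_posLength r s).measurableSet.subtype_image
    ((continuous_firstEdge r s).measurable hA)

/-- `A ↦ e^β ν(Z(A))`, the pullback `s*μ` of `μ = r_*ν`. -/
noncomputable def edgeMeasure (β : ℝ) (ν : Measure (BPath r s)) : Measure E :=
  ENNReal.ofReal (Real.exp β) •
    (ν.comap (Subtype.val : posLength r s → BPath r s)).map (firstEdge r s)

variable {r s} {β : ℝ} {ν : Measure (BPath r s)}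

lemma edgeMeasure_apply {A : Set E} (hA : MeasurableSet A) :
    edgeMeasure r s β ν A = ENNReal.ofReal (Real.exp β) * ν (edgeCyl r s A) := by
  rw [edgeMeasure, Measure.smul_apply, smul_eq_mul,
    Measure.map_apply (continuous_firstEdge r s).measurable hA,
    comap_subtype_coe_apply (isOpen_posLength r s).measurableSet, edgeCyl_eq_image]

lemma QuasiInv.measure_edgeCyl (hqi : QuasiInv r s β ν) {U : Set E} (hU : IsOpen U)
    (hinj : InjOn s U) {A : Set E} (hAU : A ⊆ U) (hA : MeasurableSet A) :
    ν (edgeCyl r s A) = ENNReal.ofReal (Real.exp (-β)) * ν (brng r s ⁻¹' (s '' A)) := by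
  convert hqi _ (isOpen_edgeCyl r s hU) (disjoint_edgeCyl_vtxSet r s U)
    (injOn_shiftC_edgeCyl r s hinj) _ (edgeCyl_mono r s hAU) (measurableSet_edgeCyl r s hA) using 3
  exact (preimage_shiftC_image_edgeCyl r s A).symm

lemma isFiniteMeasureOnCompacts_edgeMeasure [T2Space V] [T2Space E] (hr : Continuous r)
    (hs : Continuous s) [IsFiniteMeasureOnCompacts ν] :
    IsFiniteMeasureOnCompacts (edgeMeasure r s β ν) :=
  ⟨fun K hK => by
    have hsub : edgeCyl r s K ⊆ brng r s ⁻¹' (r '' K) := fun x hx => by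
      obtain ⟨hx1, hxK⟩ := (mem_edgeCyl r s).1 hx
      exact ⟨_, hxK, r_firstEdgeC r s x.val hx1⟩
    rw [edgeMeasure_apply hK.isClosed.measurableSet]
    exact ENNReal.mul_lt_top ENNReal.ofReal_lt_top ((measure_mono hsub).trans_lt
      (isCompact_preimage_brng r s hr hs (hK.image hr)).measure_lt_top)⟩

variable [MeasurableSpace V] [BorelSpace V]

lemma isPullback_edgeMeasure (hs : IsLocalHomeomorph s) (hqi : QuasiInv r s β ν) :
    IsPullback s (edgeMeasure r s β ν) (ν.map (brng r s)) := by
  intro U hU hinj A hAU hA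
  have hsA := hs.measurableSet_image hU hinj hAU hA
  rw [edgeMeasure_apply hA, hqi.measure_edgeCyl hU hinj hAU hA,
    Measure.map_apply (continuous_brng r s).measurable hsA, ← mul_assoc,
    ← ENNReal.ofReal_mul (Real.exp_nonneg β), ← Real.exp_add, add_neg_cancel, Real.exp_zero,
    ENNReal.ofReal_one, one_mul]

lemma map_edgeMeasure_apply (hr : Continuous r) {B : Set V} (hB : MeasurableSet B) :
    (edgeMeasure r s β ν).map r B =
      ENNReal.ofReal (Real.exp β) * ν (brng r s ⁻¹' B ∩ posLength r s) := by
  rw [Measure.map_apply hr.measurable hB, edgeMeasure_apply (hr.measurable hB),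
    edgeCyl_preimage_r]

lemma map_edgeMeasure_le (hr : Continuous r) :
    (edgeMeasure r s β ν).map r ≤ ENNReal.ofReal (Real.exp β) • ν.map (brng r s) := by
  refine Measure.le_iff.2 fun B hB => ?_
  rw [map_edgeMeasure_apply hr hB, Measure.smul_apply, smul_eq_mul,
    Measure.map_apply (continuous_brng r s).measurable hB]
  gcongr
  exact inter_subset_left

lemma map_edgeMeasure_apply_of_forall_regularVertex (hr : Continuous r) {B : Set V}
    (hB : MeasurableSet B) (hBreg : ∀ v ∈ B, RegularVertex r v) :
    (edgeMeasure r s β ν).map r B = ENNReal.ofReal (Real.exp β) * ν.map (brng r s) B := by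
  rw [map_edgeMeasure_apply hr hB, Measure.map_apply (continuous_brng r s).measurable hB,
    inter_eq_left.2 (show brng r s ⁻¹' B ⊆ posLength r s from
      fun x hx => one_le_blen_of_regularVertex r s (hBreg _ hx))]

end Measure

/-- the pushforward of a `β`-quasi-invariant regular Borel measure on `∂E`
along the extended range map `r : ∂E → E⁰` is a regular Borel measure on `E⁰` which is
`β`-sub-invariant: `Tμ ≤ e^β μ` with equality on the regular vertices, where `T = r_* s*`. -/
theorem stmt14 {V E : Type u} (r s : E → V) [TopologicalSpace V] [TopologicalSpace E]
    [T2Space V] [T2Space E] [LocallyCompactSpace V] [LocallyCompactSpace E]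
    [SecondCountableTopology V] [SecondCountableTopology E]
    [MeasurableSpace V] [BorelSpace V] [MeasurableSpace E] [BorelSpace E]
    (hr : Continuous r) (hs : IsLocalHomeomorph s)
    (β : ℝ) (ν : Measure (BPath r s)) (hreg : ν.Regular) (hqi : QuasiInv r s β ν) :
    (Measure.map (brng r s) ν).Regular ∧ SubInv r s β (Measure.map (brng r s) ν) := by
  have := isFiniteMeasureOnCompacts_map_brng r s hr hs.continuous ν
  have := isFiniteMeasureOnCompacts_edgeMeasure hr hs.continuous (β := β) (ν := ν)
  have hμ : (ν.map (brng r s)).Regular := inferInstance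
  exact ⟨hμ, hμ, edgeMeasure r s β ν, inferInstance, isPullback_edgeMeasure hs hqi,
    map_edgeMeasure_le hr, fun _ hB hBreg =>
      map_edgeMeasure_apply_of_forall_regularVertex hr hB hBreg⟩

end TopGraph
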